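/- Let A be an n-rigid group with principal series A = A_1 > A_2 > ... > A_n > A_{n+1} = 1, and let G be a group containing A as a subgroup. Suppose Φ is a set of A-epimorphisms from G onto A that A-discriminates G. Then: (1) G is an n-rigid group; (2) if G = G_1 > G_2 > ... > G_n > G_{n+1} = 1 is the principal series of G, then G_i φ = A_i for every φ in Φ and every i = 1, ..., n+1; (3) for each i, the group A/A_i discriminates the group G/G_i by the set of epimorphisms induced from Φ. -/

import Mathlib

/-!
STATEMENT 18 (Lemma on discrimination): Let `A` be an `n`-rigid group with principal
series `A = A_1 > ... > A_{n+1} = 1`, and `G` a group containing `A` as a subgroup.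
Suppose `Φ` is a set of `A`-epimorphisms `G → A` (surjective homomorphisms fixing `A`
pointwise) that `A`-discriminates `G`. Then: (1) `G` is `n`-rigid; (2) if
`G = G_1 > ... > G_{n+1} = 1` is the principal series of `G` then `G_i φ = A_i` for
every `φ ∈ Φ` and all `i`; (3) `A/A_i` discriminates `G/G_i` by the set of epimorphisms
induced from `Φ` (expressed on coset representatives: some `φ ∈ Φ` maps any finitely
many pairwise distinct cosets mod `G_i` to pairwise distinct cosets mod `A_i`).
-/

open scoped commutatorElement

/-- A principal series of length `n`: `s 0 = G ≥ ... ≥ s n = 1`, each term normal in `G`,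
strictly decreasing, with abelian factors `s i / s (i+1)` that are torsion-free as right
`ℤ[G / s i]`-modules (the module structure given by conjugation); the torsion-freeness is
expressed elementwise: a nonzero element of the group ring (given by representatives
`h j` of pairwise distinct cosets modulo `s i` and integer coefficients `m j`, not all zero)
applied to `c ∈ s i` lies in `s (i+1)` only if `c` does. -/
def IsPrincipalSeries {G : Type*} [Group G] {n : ℕ} (s : Fin (n + 1) → Subgroup G) : Prop :=
  s 0 = ⊤ ∧ s (Fin.last n) = ⊥ ∧
  (∀ i, (s i).Normal) ∧
  (∀ i : Fin n, s i.succ < s i.castSucc) ∧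
  (∀ i : Fin n, ∀ x ∈ s i.castSucc, ∀ y ∈ s i.castSucc, ⁅x, y⁆ ∈ s i.succ) ∧
  (∀ i : Fin n, ∀ c ∈ s i.castSucc, ∀ (k : ℕ) (h : Fin k → G) (m : Fin k → ℤ),
    (∀ j l : Fin k, j ≠ l → (h j)⁻¹ * h l ∉ s i.castSucc) →
    (∃ j, m j ≠ 0) →
    (List.ofFn fun j => ((h j)⁻¹ * c * h j) ^ m j).prod ∈ s i.succ →
    c ∈ s i.succ)

/-- A group is `n`-rigid if it has a principal series of length `n`. -/
def IsRigid (G : Type*) [Group G] (n : ℕ) : Prop :=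
  ∃ s : Fin (n + 1) → Subgroup G, IsPrincipalSeries s

/-- The family `t` of elements of `Gi` is linearly independent (in the factor `Gi/Gi1`)
over the group ring `ℤ[G/Gi]`, expressed elementwise. -/
def LinIndepMod {G : Type*} [Group G] (Gi Gi1 : Subgroup G) {k : ℕ} (t : Fin k → G) : Prop :=
  (∀ j, t j ∈ Gi) ∧
  ∀ (l : ℕ) (h : Fin k → Fin l → G) (m : Fin k → Fin l → ℤ),
    (∀ j, ∀ p q : Fin l, p ≠ q → (h j p)⁻¹ * h j q ∉ Gi) →
    (List.ofFn fun j : Fin k =>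
      (List.ofFn fun p : Fin l => ((h j p)⁻¹ * t j * h j p) ^ m j p).prod).prod ∈ Gi1 →
    ∀ j p, m j p = 0

/-- The rank of the factor `Gi/Gi1` as a `ℤ[G/Gi]`-module: the supremum of cardinalities
of linearly independent families. -/
noncomputable def rankAt {G : Type*} [Group G] (Gi Gi1 : Subgroup G) : ℕ∞ :=
  ⨆ (k : ℕ) (_ : ∃ t : Fin k → G, LinIndepMod Gi Gi1 t), (k : ℕ∞)

/-- `r_i(G)` computed from a principal series `s`. -/
noncomputable def seriesRank {G : Type*} [Group G] {n : ℕ} (s : Fin (n + 1) → Subgroup G)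
    (i : Fin n) : ℕ∞ :=
  rankAt (s i.castSucc) (s i.succ)


/-!
Set `G_i = {g | φ g ∈ A_i for all φ ∈ Φ}`. By torsion-freeness, for `c ∈ A_j \ A_{j+1}` one has
`u ∈ A_j ↔ ⁅c, u⁆ ∈ A_{j+1}`, so membership in `A_i` is a word equation `w_i(u) = 1`, with `w_i`
an iterated commutator with constants in `A`. Every `φ ∈ Φ` fixes these constants, hence
`g ∈ G_i ↔ w_i(g) = 1`, and a `φ` injective on finitely many values `w_i(g)` reflects membership
in all the `G_i` at once. This transfers the axioms of a principal series, and discrimination,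
from `A` to `G`. A principal series is unique: for normal `N`, `⁅N, N⁆ ≤ s_{i+1}` forces
`N ≤ s_i`, and descending induction gives `t_i ≤ s_i`.
-/

namespace IsPrincipalSeries

variable {H : Type*} [Group H] {n : ℕ} {s : Fin (n + 1) → Subgroup H}

theorem commutator_mem_succ_iff (hs : IsPrincipalSeries s) {i : Fin n} {c : H}
    (hc : c ∈ s i.castSucc) (hc' : c ∉ s i.succ) (u : H) :
    ⁅c, u⁆ ∈ s i.succ ↔ u ∈ s i.castSucc := by
  refine ⟨fun h => ?_, hs.2.2.2.2.1 i c hc u⟩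
  by_contra hu
  -- `⁅c, u⁆ = c * (u c u⁻¹)⁻¹` is `c` acted on by the nonzero group-ring element `1 - u⁻¹`.
  refine hc' (hs.2.2.2.2.2 i c hc 2 ![1, u⁻¹] ![1, -1] ?_ ⟨0, one_ne_zero⟩ ?_)
  · intro j l hjl
    fin_cases j <;> fin_cases l <;> simp_all
  · simpa [List.ofFn_succ, commutatorElement_def, mul_assoc] using h

theorem le_of_commutator_le (hs : IsPrincipalSeries s) {N : Subgroup H} [N.Normal] {i : Fin n}
    (hN : ⁅N, N⁆ ≤ s i.succ) : N ≤ s i.castSucc := by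
  intro g hg
  by_contra hgs
  obtain ⟨c, hc, hc'⟩ := SetLike.exists_of_lt (hs.2.2.2.1 i)
  have := hs.2.2.1 i.castSucc
  have hcg : ⁅c, g⁆ ∈ s i.castSucc :=
    Subgroup.commutator_le_left _ ⊤ (Subgroup.commutator_mem_commutator hc trivial)
  have hcg' : ⁅c, g⁆ ∉ s i.succ := mt (hs.commutator_mem_succ_iff hc hc' g).1 hgs
  have hcgN : ⁅c, g⁆ ∈ N :=
    Subgroup.commutator_le_right ⊤ N (Subgroup.commutator_mem_commutator trivial hg)
  exact hgs ((hs.commutator_mem_succ_iff hcg hcg' g).1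
    (hN (Subgroup.commutator_mem_commutator hcgN hg)))

theorem le_of_isPrincipalSeries {t : Fin (n + 1) → Subgroup H} (hs : IsPrincipalSeries s)
    (ht : IsPrincipalSeries t) (i : Fin (n + 1)) : t i ≤ s i := by
  induction i using Fin.reverseInduction with
  | last => simp [ht.2.1]
  | cast i ih =>
    have := ht.2.2.1 i.castSucc
    exact hs.le_of_commutator_le ((Subgroup.commutator_le.2 (ht.2.2.2.2.1 i)).trans ih)

theorem unique {t : Fin (n + 1) → Subgroup H} (hs : IsPrincipalSeries s)
    (ht : IsPrincipalSeries t) : s = t :=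
  funext fun i => le_antisymm (ht.le_of_isPrincipalSeries hs i) (hs.le_of_isPrincipalSeries ht i)

end IsPrincipalSeries

section IteratedCommutator

variable {G H : Type*} [Group G] [Group H] {n : ℕ}

/-- `iteratedCommutator c i u = ⁅c (n-1), ⁅…, ⁅c i, u⁆…⁆⁆`. -/
def iteratedCommutator (c : Fin n → H) : Fin (n + 1) → H → H :=
  Fin.reverseInduction id fun i w u => w ⁅c i, u⁆

@[simp]
theorem iteratedCommutator_last (c : Fin n → H) : iteratedCommutator c (Fin.last n) = id :=
  Fin.reverseInduction_last

theorem iteratedCommutator_castSucc (c : Fin n → H) (i : Fin n) (u : H) :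
    iteratedCommutator c i.castSucc u = iteratedCommutator c i.succ ⁅c i, u⁆ := by
  rw [iteratedCommutator, Fin.reverseInduction_castSucc]
  rfl

theorem map_iteratedCommutator (f : G →* H) (c : Fin n → G) (i : Fin (n + 1)) (g : G) :
    f (iteratedCommutator c i g) = iteratedCommutator (f ∘ c) i (f g) := by
  induction i using Fin.reverseInduction generalizing g with
  | last => simp
  | cast i ih => simp [iteratedCommutator_castSucc, ih]

theorem IsPrincipalSeries.exists_iteratedCommutator {s : Fin (n + 1) → Subgroup H}
    (hs : IsPrincipalSeries s) :
    ∃ c : Fin n → H, ∀ i u, u ∈ s i ↔ iteratedCommutator c i u = 1 := by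
  choose c hc hc' using fun i => SetLike.exists_of_lt (hs.2.2.2.1 i)
  refine ⟨c, fun i => ?_⟩
  induction i using Fin.reverseInduction with
  | last => simp [hs.2.1]
  | cast i ih =>
    intro u
    rw [iteratedCommutator_castSucc, ← ih, hs.commutator_mem_succ_iff (hc i) (hc' i)]

end IteratedCommutator

section PullbackSeries

variable {G H : Type*} [Group G] [Group H] {n : ℕ}

def pullbackSeries (Φ : Set (G →* H)) (s : Fin (n + 1) → Subgroup H) (i : Fin (n + 1)) :
    Subgroup G :=
  ⨅ φ ∈ Φ, (s i).comap φ

theorem mem_pullbackSeries {Φ : Set (G →* H)} {s : Fin (n + 1) → Subgroup H} {i : Fin (n + 1)}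
    {g : G} : g ∈ pullbackSeries Φ s i ↔ ∀ φ ∈ Φ, φ g ∈ s i := by
  simp [pullbackSeries]

variable {A : Subgroup G} {Φ : Set (G →* A)} {s : Fin (n + 1) → Subgroup A}

theorem coe_mem_pullbackSeries_iff (hfix : ∀ φ ∈ Φ, ∀ a : A, φ a = a) (hΦ : Φ.Nonempty)
    {i : Fin (n + 1)} (a : A) : (a : G) ∈ pullbackSeries Φ s i ↔ a ∈ s i := by
  obtain ⟨φ₀, hφ₀⟩ := hΦ
  refine ⟨fun h => ?_, fun h => mem_pullbackSeries.2 fun φ hφ => ?_⟩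
  · simpa [hfix φ₀ hφ₀] using mem_pullbackSeries.1 h φ₀ hφ₀
  · rwa [hfix φ hφ]

theorem map_pullbackSeries (hfix : ∀ φ ∈ Φ, ∀ a : A, φ a = a) {φ : G →* A} (hφ : φ ∈ Φ)
    (i : Fin (n + 1)) : (pullbackSeries Φ s i).map φ = s i := by
  refine le_antisymm (Subgroup.map_le_iff_le_comap.2 fun g hg => mem_pullbackSeries.1 hg φ hφ)
    fun a ha => ⟨a, (coe_mem_pullbackSeries_iff hfix ⟨φ, hφ⟩ a).2 ha, hfix φ hφ a⟩

theorem map_iteratedCommutator_coe {φ : G →* A} (hφ : ∀ a : A, φ a = a) (c : Fin n → A)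
    (i : Fin (n + 1)) (g : G) :
    φ (iteratedCommutator (fun j => (c j : G)) i g) = iteratedCommutator c i (φ g) := by
  rw [map_iteratedCommutator]
  congr
  exact funext fun j => hφ (c j)

theorem mem_pullbackSeries_iff_iteratedCommutator (hfix : ∀ φ ∈ Φ, ∀ a : A, φ a = a)
    (hdisc : ∀ K : Finset G, ∃ φ ∈ Φ, Set.InjOn φ K) {c : Fin n → A}
    (hc : ∀ i (a : A), a ∈ s i ↔ iteratedCommutator c i a = 1) (i : Fin (n + 1)) (g : G) :
    g ∈ pullbackSeries Φ s i ↔ iteratedCommutator (fun j => (c j : G)) i g = 1 := by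
  simp only [mem_pullbackSeries, hc]
  refine ⟨fun h => ?_, fun h φ hφ => ?_⟩
  · classical
    obtain ⟨φ, hφ, hinj⟩ := hdisc {iteratedCommutator (fun j => (c j : G)) i g, 1}
    refine hinj (by simp) (by simp) ?_
    rw [map_one, map_iteratedCommutator_coe (hfix φ hφ), h φ hφ]
  · rw [← map_iteratedCommutator_coe (hfix φ hφ), h, map_one]

theorem exists_forall_mem_pullbackSeries (hs : IsPrincipalSeries s)
    (hfix : ∀ φ ∈ Φ, ∀ a : A, φ a = a) (hdisc : ∀ K : Finset G, ∃ φ ∈ Φ, Set.InjOn φ K)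
    (K : Finset G) : ∃ φ ∈ Φ, ∀ g ∈ K, ∀ i, φ g ∈ s i → g ∈ pullbackSeries Φ s i := by
  classical
  obtain ⟨c, hc⟩ := hs.exists_iteratedCommutator
  obtain ⟨φ, hφ, hinj⟩ := hdisc <| insert 1 <|
    (K ×ˢ Finset.univ).image fun p => iteratedCommutator (fun j => (c j : G)) p.2 p.1
  refine ⟨φ, hφ, fun g hg i hgi => ?_⟩
  rw [mem_pullbackSeries_iff_iteratedCommutator hfix hdisc hc]
  refine hinj (by simpa using Or.inr ⟨g, hg, i, rfl⟩) (by simp) ?_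
  rw [map_one, map_iteratedCommutator_coe (hfix φ hφ), ← hc]
  exact hgi

theorem isPrincipalSeries_pullbackSeries (hs : IsPrincipalSeries s)
    (hfix : ∀ φ ∈ Φ, ∀ a : A, φ a = a) (hdisc : ∀ K : Finset G, ∃ φ ∈ Φ, Set.InjOn φ K) :
    IsPrincipalSeries (pullbackSeries Φ s) := by
  classical
  obtain ⟨c, hc⟩ := hs.exists_iteratedCommutator
  have hΦ : Φ.Nonempty := let ⟨φ, hφ, _⟩ := hdisc ∅; ⟨φ, hφ⟩
  refine ⟨?_, ?_, fun i => ?_, fun i => ?_, fun i x hx y hy => ?_, ?_⟩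
  · ext g
    simp [mem_pullbackSeries, hs.1]
  · ext g
    simp [mem_pullbackSeries_iff_iteratedCommutator hfix hdisc hc]
  · exact Subgroup.normal_iInf_normal fun φ =>
      Subgroup.normal_iInf_normal fun _ => have := hs.2.2.1 i; inferInstance
  · obtain ⟨hle, a, ha, ha'⟩ := SetLike.lt_iff_le_and_exists.1 (hs.2.2.2.1 i)
    refine SetLike.lt_iff_le_and_exists.2 ⟨fun g hg => ?_, (a : G), ?_⟩
    · exact mem_pullbackSeries.2 fun φ hφ => hle (mem_pullbackSeries.1 hg φ hφ)
    · simpa only [coe_mem_pullbackSeries_iff hfix hΦ] using And.intro ha ha'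
  · refine mem_pullbackSeries.2 fun φ hφ => ?_
    rw [map_commutatorElement]
    exact hs.2.2.2.2.1 i _ (mem_pullbackSeries.1 hx φ hφ) _ (mem_pullbackSeries.1 hy φ hφ)
  · intro i g hg k h m hdist hm hprod
    obtain ⟨φ, hφ, hK⟩ := exists_forall_mem_pullbackSeries hs hfix hdisc <|
      insert g (Finset.univ.image fun p : Fin k × Fin k => (h p.1)⁻¹ * h p.2)
    refine hK g (Finset.mem_insert_self _ _) _ (hs.2.2.2.2.2 i (φ g)
      (mem_pullbackSeries.1 hg φ hφ) k (φ ∘ h) m (fun j l hjl hjl' => ?_) hm ?_)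
    · refine hdist j l hjl (hK _ ?_ _ (by simpa using hjl'))
      exact Finset.mem_insert_of_mem (Finset.mem_image.2 ⟨(j, l), Finset.mem_univ _, rfl⟩)
    · simpa [map_list_prod, List.map_ofFn, Function.comp_def]
        using mem_pullbackSeries.1 hprod φ hφ

end PullbackSeries

theorem stmt18_general {G : Type} [Group G] (n : ℕ) (A : Subgroup G)
    (sA : Fin (n + 1) → Subgroup A) (hsA : IsPrincipalSeries sA)
    (Φ : Set (G →* A))
    (hfix : ∀ φ ∈ Φ, ∀ a : A, φ ↑a = a)
    (hdisc : ∀ K : Finset G, ∃ φ ∈ Φ, Set.InjOn φ ↑K) :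
    IsRigid G n ∧
    ∀ sG : Fin (n + 1) → Subgroup G, IsPrincipalSeries sG →
      (∀ φ ∈ Φ, ∀ i : Fin (n + 1), Subgroup.map φ (sG i) = sA i) ∧
      (∀ i : Fin (n + 1), ∀ K : Finset G, ∃ φ ∈ Φ,
        ∀ x ∈ K, ∀ y ∈ K, (φ x)⁻¹ * φ y ∈ sA i → x⁻¹ * y ∈ sG i) := by
  classical
  have hT := isPrincipalSeries_pullbackSeries hsA hfix hdisc
  refine ⟨⟨_, hT⟩, fun sG hsG => ?_⟩
  obtain rfl := hsG.unique hT
  refine ⟨fun φ hφ i => map_pullbackSeries hfix hφ i, fun i K => ?_⟩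
  obtain ⟨φ, hφ, hK⟩ := exists_forall_mem_pullbackSeries hsA hfix hdisc <|
    (K ×ˢ K).image fun p => p.1⁻¹ * p.2
  refine ⟨φ, hφ, fun x hx y hy hxy => hK _ ?_ i (by simpa using hxy)⟩
  exact Finset.mem_image.2 ⟨(x, y), Finset.mem_product.2 ⟨hx, hy⟩, rfl⟩

theorem stmt18 {G : Type} [Group G] (n : ℕ) (A : Subgroup G)
    (sA : Fin (n + 1) → Subgroup A) (hsA : IsPrincipalSeries sA)
    (Φ : Set (G →* A))
    (hepi : ∀ φ ∈ Φ, Function.Surjective φ)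
    (hfix : ∀ φ ∈ Φ, ∀ a : A, φ ↑a = a)
    (hdisc : ∀ K : Finset G, ∃ φ ∈ Φ, Set.InjOn φ ↑K) :
    IsRigid G n ∧
    ∀ sG : Fin (n + 1) → Subgroup G, IsPrincipalSeries sG →
      (∀ φ ∈ Φ, ∀ i : Fin (n + 1), Subgroup.map φ (sG i) = sA i) ∧
      (∀ i : Fin (n + 1), ∀ K : Finset G, ∃ φ ∈ Φ,
        ∀ x ∈ K, ∀ y ∈ K, (φ x)⁻¹ * φ y ∈ sA i → x⁻¹ * y ∈ sG i) :=
  stmt18_general n A sA hsA Φ hfix hdisc
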